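/- arXiv:1612.00593 — 3 statements merged into one kernel-verified Lean document; each statement's English description precedes it below -/
import Mathlib

section
/- (Universal approximation, Theorem 1.) Let m ≥ 1 and n ≥ 1 be natural numbers, and let 𝒳 = {S : S is a finite subset of [0,1]^m with |S| = n}. Suppose f : 𝒳 → ℝ is continuous with respect to the Hausdorff distance d_H, i.e., for every ε > 0 there exists δ > 0 such that for all S, S' ∈ 𝒳, d_H(S, S') < δ implies |f(S) − f(S')| < ε. Then for every ε > 0 there exist a natural number K, a continuous function h : [0,1]^m → ℝ^K, and a continuous function γ : ℝ^K → ℝ, such that for every S ∈ 𝒳, |f(S) − γ(MAX_{x ∈ S} h(x))| < ε, where MAX_{x ∈ S} h(x) ∈ ℝ^K denotes the coordinatewise maximum, i.e., its j-th coordinate is max_{x ∈ S} h_j(x). -/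
/-!
Fix a finite `r`-net `g₁, …, g_K` of the cube and take the features `h x j = -dist (g j) x`.
Max-pooling them over `S` gives the vector `(-infDist (g j) S)ⱼ`, and this vector determines `S`
up to Hausdorff distance `2r`: a point `x ∈ S` lies within `r` of some `g j`, so `S'` has a point
within `infDist (g j) S + η + r ≤ 2r + η` of `x` as soon as the two pooled vectors are `η`-close.
Hence `f` is uniformly close to a function of the pooled vector, and a partition of unity on `ℝ^K`
turns this into a continuous `γ`.
-/

/-- The closed unit cube `[0,1]^m` in `ℝ^m` (with the Euclidean metric). -/
def unitCube (m : ℕ) : Set (EuclideanSpace ℝ (Fin m)) :=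
  {x | ∀ j, x j ∈ Set.Icc (0 : ℝ) 1}

/-- Coordinatewise maximum of `h` over a finite nonempty set `S`:
`(maxPool h S hS) j = max_{x ∈ S} h x j`. -/
def maxPool {m K : ℕ} (h : EuclideanSpace ℝ (Fin m) → Fin K → ℝ)
    (S : Finset (EuclideanSpace ℝ (Fin m))) (hS : S.Nonempty) : Fin K → ℝ :=
  fun j => S.sup' hS (fun x => h x j)

open Metric Set Filter Topology

theorem Finset.sup'_neg_dist_eq_neg_infDist {E : Type*} [PseudoMetricSpace E] (S : Finset E)
    (hS : S.Nonempty) (y : E) : S.sup' hS (fun x => -dist y x) = -infDist y S := by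
  obtain ⟨x₀, hx₀, hdist⟩ := S.finite_toSet.isCompact.exists_infDist_eq_dist (by simpa using hS) y
  refine le_antisymm (Finset.sup'_le _ _ fun x hx => neg_le_neg (infDist_le_dist_of_mem hx)) ?_
  rw [hdist]
  exact Finset.le_sup' (fun x => -dist y x) hx₀

theorem infDist_le_of_infDist_net_le {E ι : Type*} [PseudoMetricSpace E] {s t : Set E}
    {g : ι → E} {r η : ℝ} (hnet : ∀ x ∈ s, ∃ j, dist x (g j) ≤ r)
    (hclose : ∀ j, infDist (g j) t ≤ infDist (g j) s + η) {x : E} (hx : x ∈ s) :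
    infDist x t ≤ 2 * r + η := by
  obtain ⟨j, hj⟩ := hnet x hx
  calc infDist x t ≤ infDist (g j) t + dist x (g j) := infDist_le_infDist_add_dist
    _ ≤ dist (g j) x + η + r := by
        gcongr
        exact (hclose j).trans (by gcongr; exact infDist_le_dist_of_mem hx)
    _ ≤ 2 * r + η := by rw [dist_comm]; linarith

theorem hausdorffDist_le_of_infDist_net {E ι : Type*} [PseudoMetricSpace E] {A s t : Set E}
    {g : ι → E} {r η : ℝ} (hr : 0 ≤ r) (hη : 0 ≤ η) (hs : s ⊆ A) (ht : t ⊆ A)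
    (hnet : ∀ x ∈ A, ∃ j, dist x (g j) ≤ r)
    (hclose : ∀ j, |infDist (g j) s - infDist (g j) t| ≤ η) :
    hausdorffDist s t ≤ 2 * r + η := by
  refine hausdorffDist_le_of_infDist (by positivity) (fun x hx => ?_) (fun x hx => ?_)
  · exact infDist_le_of_infDist_net_le (fun y hy => hnet y (hs hy))
      (fun j => by linarith [(abs_sub_le_iff.1 (hclose j)).2]) hx
  · exact infDist_le_of_infDist_net_le (fun y hy => hnet y (ht hy))
      (fun j => by linarith [(abs_sub_le_iff.1 (hclose j)).1]) hx

theorem hausdorffDist_le_of_dist_maxPool_lt {m K : ℕ} {A : Set (EuclideanSpace ℝ (Fin m))}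
    {g : Fin K → EuclideanSpace ℝ (Fin m)} {r η : ℝ} (hr : 0 ≤ r)
    (hnet : ∀ x ∈ A, ∃ j, dist x (g j) ≤ r) {S S' : Finset (EuclideanSpace ℝ (Fin m))}
    (hS : S.Nonempty) (hS' : S'.Nonempty) (hSA : ↑S ⊆ A) (hS'A : ↑S' ⊆ A)
    (hdist : dist (maxPool (fun x j => -dist (g j) x) S hS)
      (maxPool (fun x j => -dist (g j) x) S' hS') < η) :
    hausdorffDist (S : Set (EuclideanSpace ℝ (Fin m))) S' ≤ 2 * r + η := by
  have hη : 0 < η := dist_nonneg.trans_lt hdist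
  refine hausdorffDist_le_of_infDist_net hr hη.le hSA hS'A hnet fun j => ?_
  have := (dist_pi_lt_iff hη).1 hdist j
  simp only [maxPool, Finset.sup'_neg_dist_eq_neg_infDist, Real.dist_eq, neg_sub_neg,
    abs_sub_comm] at this
  exact this.le

theorem IsCompact.exists_fin_net {E : Type*} [PseudoMetricSpace E] {A : Set E} (hA : IsCompact A)
    {r : ℝ} (hr : 0 < r) : ∃ (K : ℕ) (g : Fin K → E), ∀ x ∈ A, ∃ j, dist x (g j) < r := by
  obtain ⟨T, -, hT, hcover⟩ := hA.finite_cover_balls hr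
  obtain ⟨K, g, rfl⟩ := hT.fin_embedding
  refine ⟨K, g, fun x hx => ?_⟩
  simpa using hcover hx

theorem isCompact_unitCube (m : ℕ) : IsCompact (unitCube m) := by
  have : unitCube m = WithLp.toLp 2 '' univ.pi fun _ => Icc 0 1 := by
    ext x
    refine ⟨fun hx => ⟨x.ofLp, fun j _ => hx j, rfl⟩, ?_⟩
    rintro ⟨y, hy, rfl⟩ j
    exact hy j (mem_univ j)
  rw [this]
  exact (isCompact_univ_pi fun _ => isCompact_Icc).image (PiLp.continuous_toLp 2 _)

theorem exists_continuous_abs_sub_comp_le {α E : Type*} [MetricSpace E] (Φ : α → E)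
    (f : α → ℝ) {δ ε : ℝ} (hδ : 0 < δ)
    (hf : ∀ a b, dist (Φ a) (Φ b) < δ → |f a - f b| ≤ ε) :
    ∃ γ : E → ℝ, Continuous γ ∧ ∀ a, |f a - γ (Φ a)| ≤ ε := by
  set ρ := δ / 4
  have hρ : 0 < ρ := by positivity
  -- `t v` collects the values compatible with every `f a` whose `Φ a` is `ρ`-close to `v`; these
  -- sets are convex and admit local constant selections, which a partition of unity glues.
  let t : E → Set ℝ := fun v => ⋂ (a) (_ : dist (Φ a) v < ρ), Icc (f a - ε) (f a + ε)
  have hloc : ∀ v, ∃ c : ℝ, ∀ᶠ w in 𝓝 v, c ∈ t w := by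
    intro v
    by_cases hv : ∃ b, dist (Φ b) v < 2 * ρ
    · obtain ⟨b, hb⟩ := hv
      refine ⟨f b, eventually_of_mem (ball_mem_nhds v hρ) fun w hw => ?_⟩
      simp only [t, mem_iInter₂, ← mem_Icc_iff_abs_le]
      refine fun a ha => hf a b ?_
      calc dist (Φ a) (Φ b) ≤ dist (Φ a) w + dist w v + dist (Φ b) v := by
            linarith [dist_triangle (Φ a) w (Φ b), dist_triangle w v (Φ b), dist_comm v (Φ b)]
        _ < ρ + ρ + 2 * ρ := by gcongr; exact hw
        _ = δ := by ring
    · push Not at hv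
      refine ⟨0, eventually_of_mem (ball_mem_nhds v hρ) fun w hw => ?_⟩
      simp only [t, mem_iInter₂]
      intro a ha
      have : dist w v < ρ := hw
      linarith [hv a, dist_triangle (Φ a) w v]
  obtain ⟨γ, hγ⟩ := exists_continuous_forall_mem_convex_of_local_const
    (fun v => convex_iInter₂ fun _ _ => convex_Icc _ _) hloc
  refine ⟨γ, γ.continuous, fun a => mem_Icc_iff_abs_le.2 ?_⟩
  exact mem_iInter₂.1 (hγ (Φ a)) a (by simpa using hρ)

theorem universal_approximation_general
    (m n : ℕ)
    (f : Finset (EuclideanSpace ℝ (Fin m)) → ℝ)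
    (hf : ∀ ε > 0, ∃ δ > 0,
      ∀ S S' : Finset (EuclideanSpace ℝ (Fin m)),
        ↑S ⊆ unitCube m → S.card = n →
        ↑S' ⊆ unitCube m → S'.card = n →
        Metric.hausdorffDist (S : Set (EuclideanSpace ℝ (Fin m))) (S' : Set (EuclideanSpace ℝ (Fin m))) < δ → |f S - f S'| < ε) :
    ∀ ε > 0, ∃ (K : ℕ) (h : EuclideanSpace ℝ (Fin m) → Fin K → ℝ)
      (γ : (Fin K → ℝ) → ℝ),
      ContinuousOn h (unitCube m) ∧ Continuous γ ∧
      ∀ (S : Finset (EuclideanSpace ℝ (Fin m))) (hS : S.Nonempty),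
        ↑S ⊆ unitCube m → S.card = n →
        |f S - γ (maxPool h S hS)| < ε := by
  intro ε hε
  obtain ⟨δ, hδ, hfδ⟩ := hf (ε / 2) (half_pos hε)
  obtain ⟨K, g, hnet⟩ := (isCompact_unitCube m).exists_fin_net (by positivity : 0 < δ / 4)
  let h : EuclideanSpace ℝ (Fin m) → Fin K → ℝ := fun x j => -dist (g j) x
  let 𝒳 := {S : Finset (EuclideanSpace ℝ (Fin m)) // S.Nonempty ∧ ↑S ⊆ unitCube m ∧ S.card = n}
  have hΦ : ∀ S S' : 𝒳, dist (maxPool h S.1 S.2.1) (maxPool h S'.1 S'.2.1) < δ / 4 →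
      |f S - f S'| ≤ ε / 2 := by
    rintro ⟨S, hS, hSc, hSn⟩ ⟨S', hS', hS'c, hS'n⟩ hdist
    refine (hfδ S S' hSc hSn hS'c hS'n ?_).le
    have := hausdorffDist_le_of_dist_maxPool_lt (by positivity)
      (fun x hx => (hnet x hx).imp fun _ => le_of_lt) hS hS' hSc hS'c hdist
    linarith
  obtain ⟨γ, hγ, hγf⟩ := exists_continuous_abs_sub_comp_le (fun S : 𝒳 => maxPool h S.1 S.2.1)
    (fun S => f S.1) (by positivity) hΦ
  refine ⟨K, h, γ, ?_, hγ, fun S hS hSc hSn => (hγf ⟨S, hS, hSc, hSn⟩).trans_lt (half_lt_self hε)⟩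
  exact (continuous_pi fun j => (continuous_const.dist continuous_id).neg).continuousOn

/-- **Universal approximation (Theorem 1).**  If `f` is a real-valued function on
the collection `𝒳` of `n`-point subsets of `[0,1]^m` which is continuous w.r.t.
the Hausdorff distance, then for every `ε > 0` there are `K`, a continuous
`h : [0,1]^m → ℝ^K` and a continuous `γ : ℝ^K → ℝ` such that
`|f S - γ (MAX_{x ∈ S} h x)| < ε` for every `S ∈ 𝒳`. -/
theorem universal_approximation
    (m n : ℕ) (hm : 1 ≤ m) (hn : 1 ≤ n)
    (f : Finset (EuclideanSpace ℝ (Fin m)) → ℝ)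
    (hf : ∀ ε > 0, ∃ δ > 0,
      ∀ S S' : Finset (EuclideanSpace ℝ (Fin m)),
        ↑S ⊆ unitCube m → S.card = n →
        ↑S' ⊆ unitCube m → S'.card = n →
        Metric.hausdorffDist (S : Set (EuclideanSpace ℝ (Fin m))) (S' : Set (EuclideanSpace ℝ (Fin m))) < δ → |f S - f S'| < ε) :
    ∀ ε > 0, ∃ (K : ℕ) (h : EuclideanSpace ℝ (Fin m) → Fin K → ℝ)
      (γ : (Fin K → ℝ) → ℝ),
      ContinuousOn h (unitCube m) ∧ Continuous γ ∧
      ∀ (S : Finset (EuclideanSpace ℝ (Fin m))) (hS : S.Nonempty),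
        ↑S ⊆ unitCube m → S.card = n →
        |f S - γ (maxPool h S hS)| < ε :=
  universal_approximation_general m n f hf
end

section
/- (Theorem 2(b), bottleneck bound.) Let m ≥ 1 and K ≥ 1 be natural numbers, let h : [0,1]^m → ℝ^K be any function, and define u(S) ∈ ℝ^K for a finite nonempty set S ⊆ [0,1]^m by u(S)_j = max_{x ∈ S} h_j(x). Then the sets C_S and N_S of Theorem 2(a) can be chosen so that additionally |C_S| ≤ K; that is, for every finite nonempty S ⊆ [0,1]^m there exist C_S ⊆ S with 1 ≤ |C_S| ≤ K and N_S ⊆ [0,1]^m with C_S ⊆ N_S such that u(T) = u(S) for every finite nonempty T with C_S ⊆ T ⊆ N_S. -/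
/-! Each coordinate of `u(S)` is attained at some point of `S`, so one maximiser per coordinate
gives a critical set `C` of at most `K` points. Taking for `N` the points of the cube lying
below `u(S)` coordinatewise, any `T` with `C ⊆ T ⊆ N` attains every coordinate of `u(S)` and
never exceeds it, so `u(T) = u(S)`. -/

theorem Finset.exists_subset_card_le_forall_exists_sup'_eq {α ι β : Type*} [Fintype ι]
    [LinearOrder β] (f : α → ι → β) (S : Finset α) (hS : S.Nonempty) :
    ∃ C ⊆ S, C.card ≤ Fintype.card ι ∧ ∀ j, ∃ x ∈ C, S.sup' hS (f · j) = f x j := by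
  classical
  choose x hxS hx_eq using fun j => S.exists_mem_eq_sup' hS (f · j)
  refine ⟨Finset.univ.image x, ?_, Finset.card_image_le, fun j => ⟨x j, ?_, hx_eq j⟩⟩
  · simpa [Finset.image_subset_iff] using hxS
  · exact Finset.mem_image_of_mem x (Finset.mem_univ j)

theorem maxPool_eq_of_forall_le_of_forall_exists_eq {m K : ℕ}
    {h : EuclideanSpace ℝ (Fin m) → Fin K → ℝ} {T : Finset (EuclideanSpace ℝ (Fin m))}
    (hT : T.Nonempty) {v : Fin K → ℝ} (hle : ∀ y ∈ T, ∀ j, h y j ≤ v j)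
    (hattained : ∀ j, ∃ x ∈ T, h x j = v j) :
    maxPool h T hT = v := by
  funext j
  obtain ⟨x, hxT, hx_eq⟩ := hattained j
  exact le_antisymm (T.sup'_le hT _ fun y hy => hle y hy j) (hx_eq ▸ T.le_sup' (h · j) hxT)

theorem bottleneck_bound_general
    (m K : ℕ) (hK : 1 ≤ K)
    (h : EuclideanSpace ℝ (Fin m) → Fin K → ℝ)
    (S : Finset (EuclideanSpace ℝ (Fin m))) (hS : S.Nonempty)
    (hScube : ↑S ⊆ unitCube m) :
    ∃ (C : Finset (EuclideanSpace ℝ (Fin m))) (N : Set (EuclideanSpace ℝ (Fin m))),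
      C ⊆ S ∧ 1 ≤ C.card ∧ C.card ≤ K ∧ N ⊆ unitCube m ∧ ↑C ⊆ N ∧
      ∀ (T : Finset (EuclideanSpace ℝ (Fin m))) (hT : T.Nonempty),
        C ⊆ T → ↑T ⊆ N →
        maxPool h T hT = maxPool h S hS := by
  obtain ⟨C, hCS, hC_card, hC_max⟩ := S.exists_subset_card_le_forall_exists_sup'_eq h hS
  obtain ⟨x₀, hx₀C, -⟩ := hC_max ⟨0, hK⟩
  refine ⟨C, unitCube m ∩ {y | ∀ j, h y j ≤ maxPool h S hS j}, hCS,
    Finset.card_pos.mpr ⟨x₀, hx₀C⟩, by simpa using hC_card, Set.inter_subset_left,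
    fun y hy => ⟨hScube (hCS hy), fun j => S.le_sup' (h · j) (hCS hy)⟩, ?_⟩
  intro T hT hCT hTN
  refine maxPool_eq_of_forall_le_of_forall_exists_eq hT (fun y hy => (hTN hy).2) fun j => ?_
  obtain ⟨x, hxC, hx_eq⟩ := hC_max j
  exact ⟨x, hCT hxC, hx_eq.symm⟩

/-- **Theorem 2(b): bottleneck bound.**  The critical set `C_S` and noise set
`N_S` of Theorem 2(a) can be chosen so that moreover `1 ≤ |C_S| ≤ K`:
for every finite nonempty `S ⊆ [0,1]^m` there are `C_S ⊆ S` with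
`1 ≤ |C_S| ≤ K` and `N_S ⊆ [0,1]^m` with `C_S ⊆ N_S` such that
`u(T) = u(S)` for every finite nonempty `T` with `C_S ⊆ T ⊆ N_S`. -/
theorem bottleneck_bound
    (m K : ℕ) (hm : 1 ≤ m) (hK : 1 ≤ K)
    (h : EuclideanSpace ℝ (Fin m) → Fin K → ℝ)
    (S : Finset (EuclideanSpace ℝ (Fin m))) (hS : S.Nonempty)
    (hScube : ↑S ⊆ unitCube m) :
    ∃ (C : Finset (EuclideanSpace ℝ (Fin m))) (N : Set (EuclideanSpace ℝ (Fin m))),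
      C ⊆ S ∧ 1 ≤ C.card ∧ C.card ≤ K ∧ N ⊆ unitCube m ∧ ↑C ⊆ N ∧
      ∀ (T : Finset (EuclideanSpace ℝ (Fin m))) (hT : T.Nonempty),
        C ⊆ T → ↑T ⊆ N →
        maxPool h T hT = maxPool h S hS :=
  bottleneck_bound_general m K hK h S hS hScube
end

section
/- (Voxel-occupancy determination of continuous set functions, intermediate step in Theorem 1.) Let m ≥ 1 and n ≥ 1, let 𝒳 = {S : S is a finite subset of [0,1]^m with |S| = n}, and let f : 𝒳 → ℝ be continuous with respect to Hausdorff distance (for every ε > 0 there exists δ > 0 such that d_H(S, S') < δ implies |f(S) − f(S')| < ε for all S, S' ∈ 𝒳). Then for every ε > 0 there exists a natural number k ≥ 1 such that whenever S, S' ∈ 𝒳 intersect exactly the same voxels of the grid of spacing 1/k (i.e., for every i ∈ {0,1,…,k−1}^m, S ∩ V_i ≠ ∅ iff S' ∩ V_i ≠ ∅, where V_i = ∏_{j=1}^m [i_j/k, (i_j+1)/k]), one has |f(S) − f(S')| < ε. -/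
/-- The closed voxel `V_i = ∏_j [i_j/k, (i_j+1)/k]` of side `1/k` indexed by
`i ∈ {0,…,k-1}^m`. -/
def voxel (m k : ℕ) (i : Fin m → Fin k) : Set (EuclideanSpace ℝ (Fin m)) :=
  {x | ∀ j, x j ∈ Set.Icc ((i j : ℝ) / k) (((i j : ℝ) + 1) / k)}

/-!
Two points in a common voxel of spacing `1/k` are at distance at most `√m / k`, and the voxels
cover the cube. So if `S` and `S'` occupy the same voxels, every point of one lies within `√m / k`
of the other, i.e. `d_H(S, S') ≤ √m / k`; choosing `k` with `√m / k` below the modulus of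
continuity `δ` of `f` at `ε` gives the claim.
-/

open Metric Set

theorem EuclideanSpace.dist_le_sqrt_card_mul {ι : Type*} [Fintype ι]
    {x y : EuclideanSpace ℝ ι} {r : ℝ} (hr : 0 ≤ r) (h : ∀ j, dist (x j) (y j) ≤ r) :
    dist x y ≤ √(Fintype.card ι) * r := by
  rw [EuclideanSpace.dist_eq]
  calc √(∑ j, dist (x j) (y j) ^ 2) ≤ √(∑ _j : ι, r ^ 2) := by gcongr with j; exact h j
    _ = √(Fintype.card ι) * r := by
      simp [Real.sqrt_mul, Real.sqrt_sq hr]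

theorem exists_fin_mem_Icc_div {k : ℕ} (hk : 0 < k) {t : ℝ} (ht : t ∈ Icc (0 : ℝ) 1) :
    ∃ a : Fin k, t ∈ Icc ((a : ℝ) / k) (((a : ℝ) + 1) / k) := by
  have hk' : (0 : ℝ) < k := by exact_mod_cast hk
  simp only [mem_Icc, div_le_iff₀ hk', le_div_iff₀ hk']
  rcases ht.2.lt_or_eq with ht1 | rfl
  · have htk : t * k < k := by nlinarith
    refine ⟨⟨⌊t * k⌋₊, (Nat.floor_lt (by nlinarith [ht.1])).mpr htk⟩, ?_, ?_⟩
    · exact Nat.floor_le (by nlinarith [ht.1])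
    · exact (Nat.lt_floor_add_one _).le
  · refine ⟨⟨k - 1, Nat.sub_one_lt_of_lt hk⟩, ?_, ?_⟩ <;>
      simp [Nat.cast_sub (Nat.one_le_of_lt hk)]

theorem exists_voxel_mem {m k : ℕ} (hk : 0 < k) {x : EuclideanSpace ℝ (Fin m)}
    (hx : x ∈ unitCube m) : ∃ i : Fin m → Fin k, x ∈ voxel m k i := by
  choose i hi using fun j => exists_fin_mem_Icc_div hk (hx j)
  exact ⟨i, hi⟩

theorem dist_le_of_mem_voxel {m k : ℕ} {i : Fin m → Fin k} {x y : EuclideanSpace ℝ (Fin m)}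
    (hx : x ∈ voxel m k i) (hy : y ∈ voxel m k i) : dist x y ≤ √m / k := by
  have h := EuclideanSpace.dist_le_sqrt_card_mul (r := 1 / k) (by positivity) fun j =>
    (Real.dist_le_of_mem_Icc (hx j) (hy j)).trans_eq (by ring)
  simpa [div_eq_mul_one_div (√m)] using h

theorem exists_mem_dist_le_of_voxel_nonempty {m k : ℕ} (hk : 0 < k)
    {s t : Set (EuclideanSpace ℝ (Fin m))} (hs : s ⊆ unitCube m)
    (hst : ∀ i, (s ∩ voxel m k i).Nonempty → (t ∩ voxel m k i).Nonempty) :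
    ∀ x ∈ s, ∃ y ∈ t, dist x y ≤ √m / k := by
  intro x hx
  obtain ⟨i, hxi⟩ := exists_voxel_mem hk (hs hx)
  obtain ⟨y, hy, hyi⟩ := hst i ⟨x, hx, hxi⟩
  exact ⟨y, hy, dist_le_of_mem_voxel hxi hyi⟩

theorem hausdorffDist_le_of_voxel_nonempty_iff {m k : ℕ} (hk : 0 < k)
    {s t : Set (EuclideanSpace ℝ (Fin m))} (hs : s ⊆ unitCube m) (ht : t ⊆ unitCube m)
    (hst : ∀ i, (s ∩ voxel m k i).Nonempty ↔ (t ∩ voxel m k i).Nonempty) :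
    hausdorffDist s t ≤ √m / k :=
  hausdorffDist_le_of_mem_dist (by positivity)
    (exists_mem_dist_le_of_voxel_nonempty hk hs fun i => (hst i).mp)
    (exists_mem_dist_le_of_voxel_nonempty hk ht fun i => (hst i).mpr)

theorem voxel_occupancy_determines_general
    (m n : ℕ)
    (f : Finset (EuclideanSpace ℝ (Fin m)) → ℝ)
    (hf : ∀ ε > 0, ∃ δ > 0,
      ∀ S S' : Finset (EuclideanSpace ℝ (Fin m)),
        ↑S ⊆ unitCube m → S.card = n →
        ↑S' ⊆ unitCube m → S'.card = n →
        Metric.hausdorffDist (S : Set (EuclideanSpace ℝ (Fin m)))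
          (S' : Set (EuclideanSpace ℝ (Fin m))) < δ → |f S - f S'| < ε) :
    ∀ ε > 0, ∃ k : ℕ, 1 ≤ k ∧
      ∀ S S' : Finset (EuclideanSpace ℝ (Fin m)),
        ↑S ⊆ unitCube m → S.card = n →
        ↑S' ⊆ unitCube m → S'.card = n →
        (∀ i : Fin m → Fin k,
          ((S : Set (EuclideanSpace ℝ (Fin m))) ∩ voxel m k i).Nonempty ↔
          ((S' : Set (EuclideanSpace ℝ (Fin m))) ∩ voxel m k i).Nonempty) →
        |f S - f S'| < ε := by
  intro ε hε
  obtain ⟨δ, hδ, hδf⟩ := hf ε hε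
  obtain ⟨k, hk⟩ := exists_nat_gt (√m / δ)
  have hk0 : 0 < k := by exact_mod_cast (div_nonneg (Real.sqrt_nonneg _) hδ.le).trans_lt hk
  have hkδ : √m / k < δ := (div_lt_comm₀ hδ (by exact_mod_cast hk0)).mp hk
  refine ⟨k, hk0, fun S S' hS hSn hS' hS'n hSS' => hδf S S' hS hSn hS' hS'n ?_⟩
  exact (hausdorffDist_le_of_voxel_nonempty_iff hk0 hS hS' hSS').trans_lt hkδ

/-- **Voxel-occupancy determination of continuous set functions.**  If
`f : 𝒳 → ℝ` is continuous w.r.t. the Hausdorff distance on the collection `𝒳`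
of `n`-point subsets of `[0,1]^m`, then for every `ε > 0` there is `k ≥ 1` such
that whenever `S, S' ∈ 𝒳` intersect exactly the same voxels of the grid of
spacing `1/k`, one has `|f S - f S'| < ε`. -/
theorem voxel_occupancy_determines
    (m n : ℕ) (hm : 1 ≤ m) (hn : 1 ≤ n)
    (f : Finset (EuclideanSpace ℝ (Fin m)) → ℝ)
    (hf : ∀ ε > 0, ∃ δ > 0,
      ∀ S S' : Finset (EuclideanSpace ℝ (Fin m)),
        ↑S ⊆ unitCube m → S.card = n →
        ↑S' ⊆ unitCube m → S'.card = n →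
        Metric.hausdorffDist (S : Set (EuclideanSpace ℝ (Fin m)))
          (S' : Set (EuclideanSpace ℝ (Fin m))) < δ → |f S - f S'| < ε) :
    ∀ ε > 0, ∃ k : ℕ, 1 ≤ k ∧
      ∀ S S' : Finset (EuclideanSpace ℝ (Fin m)),
        ↑S ⊆ unitCube m → S.card = n →
        ↑S' ⊆ unitCube m → S'.card = n →
        (∀ i : Fin m → Fin k,
          ((S : Set (EuclideanSpace ℝ (Fin m))) ∩ voxel m k i).Nonempty ↔
          ((S' : Set (EuclideanSpace ℝ (Fin m))) ∩ voxel m k i).Nonempty) →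
        |f S - f S'| < ε :=
  voxel_occupancy_determines_general m n f hf
end
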